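/- In the real-index-zero polyform model of Cl(2ρ, 2σ) on S = ⋀ℂ^{ρ+σ}, the antilinear operators R := Γ₁ ∘ … ∘ Γ_ρ ∘ Γ_{1+2ρ+σ} ∘ … ∘ Γ_{2ρ+2σ} ∘ ∗ and R' := Γ_{ρ+1} ∘ … ∘ Γ_{2ρ} ∘ Γ_{1+2ρ} ∘ … ∘ Γ_{2ρ+σ} ∘ ∗ satisfy R² = (−1)^{(ρ−σ)(ρ−σ−1)/2} · id_S and (R')² = (−1)^{(ρ−σ)(ρ−σ+1)/2} · id_S; in particular the signs depend only on the difference ρ − σ. -/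

import Mathlib

/-- The space of polyforms for the real-index-zero model of `Cl(2ρ, 2σ)`:
the exterior algebra of `ℂ^(ρ+σ)`. -/
noncomputable abbrev ZPolyform (ρ σ : ℕ) := ExteriorAlgebra ℂ (Fin (ρ + σ) → ℂ)

/-- The creation operator `c_k`: wedging with the basis one-form `e_k`. -/
noncomputable def creaZ (ρ σ : ℕ) (k : Fin (ρ + σ)) : Module.End ℂ (ZPolyform ρ σ) :=
  LinearMap.mulLeft ℂ (ExteriorAlgebra.ι ℂ (Pi.single k 1))

/-- The annihilation operator `c_k†`: interior product (left contraction) with the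
`k`-th dual basis vector. -/
noncomputable def anniZ (ρ σ : ℕ) (k : Fin (ρ + σ)) : Module.End ℂ (ZPolyform ρ σ) :=
  CliffordAlgebra.contractLeft (Q := (0 : QuadraticForm ℂ (Fin (ρ + σ) → ℂ)))
    (LinearMap.proj k)

/-- The gamma operators of the real-index-zero model of `Cl(2ρ, 2σ)` (0-indexed):
`Γ_i = a_i + a_i†`, `Γ_{i+ρ} = I•(a_i − a_i†)` for `i < ρ` (with `a_i = c_i`), and
`Γ_{I+2ρ} = I•(ã_I + ã_I†)`, `Γ_{I+2ρ+σ} = ã_I − ã_I†` for `I < σ`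
(with `ã_I = c_{ρ+I}`). -/
noncomputable def GamZ (ρ σ : ℕ) (A : Fin (2 * ρ + 2 * σ)) : Module.End ℂ (ZPolyform ρ σ) :=
  if h1 : (A : ℕ) < ρ then
    creaZ ρ σ ⟨A, by omega⟩ + anniZ ρ σ ⟨A, by omega⟩
  else if h2 : (A : ℕ) < 2 * ρ then
    Complex.I • (creaZ ρ σ ⟨(A : ℕ) - ρ, by omega⟩ - anniZ ρ σ ⟨(A : ℕ) - ρ, by omega⟩)
  else if h3 : (A : ℕ) < 2 * ρ + σ then
    Complex.I • (creaZ ρ σ ⟨(A : ℕ) - ρ, by omega⟩ + anniZ ρ σ ⟨(A : ℕ) - ρ, by omega⟩)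
  else
    creaZ ρ σ ⟨(A : ℕ) - ρ - σ, by have := A.isLt; omega⟩
      - anniZ ρ σ ⟨(A : ℕ) - ρ - σ, by have := A.isLt; omega⟩

/-- The basis polyform `e_{i₁} ∧ ⋯ ∧ e_{i_k}` indexed by a list of indices. -/
noncomputable def basisMonomialZ (ρ σ : ℕ) (l : List (Fin (ρ + σ))) : ZPolyform ρ σ :=
  (l.map fun k => ExteriorAlgebra.ι ℂ (Pi.single k (1 : ℂ))).prod

/-- `st` is the complex conjugation `∗` on polyforms: the `ℂ`-antilinear involution fixing
each basis polyform and conjugating the complex coefficients. -/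
def IsConjugationZ (ρ σ : ℕ) (st : ZPolyform ρ σ → ZPolyform ρ σ) : Prop :=
  (∀ x y, st (x + y) = st x + st y) ∧
  (∀ (z : ℂ) (x : ZPolyform ρ σ), st (z • x) = (starRingEnd ℂ) z • st x) ∧
  (∀ l : List (Fin (ρ + σ)), st (basisMonomialZ ρ σ l) = basisMonomialZ ρ σ l)

/-- The antilinear operator `R := Γ₁ ⋯ Γ_ρ Γ_{1+2ρ+σ} ⋯ Γ_{2ρ+2σ} ∘ ∗`. -/
noncomputable def RopZ (ρ σ : ℕ) (st : ZPolyform ρ σ → ZPolyform ρ σ) :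
    ZPolyform ρ σ → ZPolyform ρ σ :=
  fun ψ =>
    ((((List.finRange ρ).map fun i => GamZ ρ σ ⟨i.1, by have := i.2; omega⟩) ++
      ((List.finRange σ).map fun j =>
        GamZ ρ σ ⟨2 * ρ + σ + j.1, by have := j.2; omega⟩)).prod) (st ψ)

/-- The antilinear operator `R' := Γ_{ρ+1} ⋯ Γ_{2ρ} Γ_{1+2ρ} ⋯ Γ_{2ρ+σ} ∘ ∗`. -/
noncomputable def RopZ' (ρ σ : ℕ) (st : ZPolyform ρ σ → ZPolyform ρ σ) :
    ZPolyform ρ σ → ZPolyform ρ σ :=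
  fun ψ =>
    ((((List.finRange ρ).map fun i => GamZ ρ σ ⟨ρ + i.1, by have := i.2; omega⟩) ++
      ((List.finRange σ).map fun j =>
        GamZ ρ σ ⟨2 * ρ + j.1, by have := j.2; omega⟩)).prod) (st ψ)

/-! Every factor `Γ_A` of `R` and `R'` is `u c_k + v c_k†` for its own mode `k`, so the `ρ + σ`
factors pairwise anticommute and square to `±1` (to `-1` exactly on the `σ` modes `ã`); hence the
operator part `P` of either one satisfies `P² = (-1)^(C(ρ+σ, 2) + σ)`. Since `∗` fixes the basis
polyforms it commutes with every `c_k` and `c_k†`, so it commutes with the real factors of `R` and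
anticommutes with the factors of `R'`, which carry a factor `i`. Thus `R² = P²` and
`R'² = (-1)^(ρ+σ) P'²`, and the exponents agree with the stated ones modulo `2`. -/

section Anticommuting

variable {R A : Type*} [CommRing R] [Ring A] [Algebra R A]

theorem List.prod_mul_eq_neg_one_pow_smul {x : A} {L : List A}
    (h : ∀ y ∈ L, y * x = -(x * y)) : L.prod * x = (-1 : R) ^ L.length • (x * L.prod) := by
  induction L with
  | nil => simp
  | cons y L ih =>
    rw [List.forall_mem_cons] at h
    rw [List.prod_cons, mul_assoc, ih h.2, mul_smul_comm, ← mul_assoc, h.1, List.length_cons,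
      pow_succ, mul_neg_one, neg_smul, neg_mul, smul_neg, mul_assoc]

theorem List.prod_mul_self_of_pairwise_anticomm {L : List A}
    (h : L.Pairwise fun x y => x * y = -(y * x)) :
    L.prod * L.prod = (-1 : R) ^ L.length.choose 2 • (L.map fun x => x * x).prod := by
  induction L with
  | nil => simp
  | cons x L ih =>
    rw [List.pairwise_cons] at h
    have hx : L.prod * x = (-1 : R) ^ L.length • (x * L.prod) :=
      List.prod_mul_eq_neg_one_pow_smul fun y hy => by rw [h.1 y hy, neg_neg]
    calc (x :: L).prod * (x :: L).prod = x * (L.prod * x) * L.prod := by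
          simp only [List.prod_cons, mul_assoc]
      _ = (-1 : R) ^ L.length • ((x * x) * (L.prod * L.prod)) := by
          rw [hx, mul_smul_comm, smul_mul_assoc]; simp only [mul_assoc]
      _ = _ := by
          rw [ih h.2, mul_smul_comm, smul_smul, List.length_cons, Nat.choose_succ_succ,
            Nat.choose_one_right, pow_add, List.map_cons, List.prod_cons]

end Anticommuting

theorem apply_list_prod_apply_of_intertwining {R M : Type*} [CommSemiring R] [AddCommMonoid M]
    [Module R M] {f : M → M} {c : R} {L : List (Module.End R M)}
    (h : ∀ T ∈ L, ∀ x, f (T x) = c • T (f x)) (x : M) :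
    f (L.prod x) = c ^ L.length • L.prod (f x) := by
  induction L generalizing x with
  | nil => simp
  | cons T L ih =>
    rw [List.forall_mem_cons] at h
    rw [List.prod_cons, Module.End.mul_apply, h.1, ih h.2, map_smul, smul_smul, List.length_cons,
      pow_succ', Module.End.mul_apply]

section CanonicalAnticommutation

variable {ρ σ : ℕ}

theorem creaZ_mul_creaZ (j k : Fin (ρ + σ)) :
    creaZ ρ σ j * creaZ ρ σ k = -(creaZ ρ σ k * creaZ ρ σ j) := by
  refine LinearMap.ext fun x => ?_
  simp only [creaZ, Module.End.mul_apply, LinearMap.mulLeft_apply, LinearMap.neg_apply,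
    ← mul_assoc]
  rw [eq_neg_of_add_eq_zero_left (ExteriorAlgebra.ι_add_mul_swap _ _), neg_mul]

theorem creaZ_mul_self (k : Fin (ρ + σ)) : creaZ ρ σ k * creaZ ρ σ k = 0 := by
  refine LinearMap.ext fun x => ?_
  simp [creaZ, ← mul_assoc]

theorem anniZ_mul_anniZ (j k : Fin (ρ + σ)) :
    anniZ ρ σ j * anniZ ρ σ k = -(anniZ ρ σ k * anniZ ρ σ j) := by
  refine LinearMap.ext fun x => ?_
  exact CliffordAlgebra.contractLeft_comm (Q := 0) _ _ x

theorem anniZ_mul_self (k : Fin (ρ + σ)) : anniZ ρ σ k * anniZ ρ σ k = 0 := by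
  refine LinearMap.ext fun x => ?_
  exact CliffordAlgebra.contractLeft_contractLeft (Q := 0) _ x

theorem anniZ_mul_creaZ (j k : Fin (ρ + σ)) :
    anniZ ρ σ j * creaZ ρ σ k = (if j = k then 1 else 0 : ℂ) • 1 - creaZ ρ σ k * anniZ ρ σ j := by
  refine LinearMap.ext fun x => ?_
  have h := CliffordAlgebra.contractLeft_ι_mul (Q := 0) (LinearMap.proj j) (Pi.single k 1) x
  simp only [anniZ, creaZ, Module.End.mul_apply, LinearMap.mulLeft_apply, LinearMap.sub_apply,
    LinearMap.smul_apply, Module.End.one_apply] at h ⊢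
  rw [h, LinearMap.proj_apply, Pi.single_apply]

/-- Every `Γ_A` is of this form, with `k` its mode. -/
noncomputable def ladderZ (u v : ℂ) (k : Fin (ρ + σ)) : Module.End ℂ (ZPolyform ρ σ) :=
  u • creaZ ρ σ k + v • anniZ ρ σ k

theorem ladderZ_mul_ladderZ_of_ne (u v u' v' : ℂ) {j k : Fin (ρ + σ)} (h : j ≠ k) :
    ladderZ u v j * ladderZ u' v' k = -(ladderZ u' v' k * ladderZ u v j) := by
  simp only [ladderZ, add_mul, mul_add, smul_mul_assoc, mul_smul_comm, creaZ_mul_creaZ j k,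
    anniZ_mul_anniZ j k, anniZ_mul_creaZ, if_neg h, if_neg h.symm, zero_smul, zero_sub, smul_neg]
  module

theorem ladderZ_mul_self (u v : ℂ) (k : Fin (ρ + σ)) :
    ladderZ u v k * ladderZ u v k = (u * v) • (1 : Module.End ℂ (ZPolyform ρ σ)) := by
  simp only [ladderZ, add_mul, mul_add, smul_mul_assoc, mul_smul_comm, creaZ_mul_self,
    anniZ_mul_self, anniZ_mul_creaZ, ↓reduceIte, smul_zero, smul_sub, smul_smul]
  module

theorem smul_ladderZ (c u v : ℂ) (k : Fin (ρ + σ)) :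
    c • ladderZ u v k = ladderZ (c * u) (c * v) k := by
  rw [ladderZ, ladderZ, smul_add, smul_smul, smul_smul]

/-- Both `R` and `R'` are of the form `ladderProdZ u v ∘ ∗`. -/
noncomputable def ladderProdZ (u v : Fin (ρ + σ) → ℂ) : Module.End ℂ (ZPolyform ρ σ) :=
  (List.ofFn fun k => ladderZ (u k) (v k) k).prod

theorem ladderProdZ_mul_self (u v : Fin (ρ + σ) → ℂ) :
    ladderProdZ u v * ladderProdZ u v = ((-1) ^ (ρ + σ).choose 2 * ∏ k, u k * v k) • 1 := by
  rw [ladderProdZ, List.prod_mul_self_of_pairwise_anticomm (R := ℂ), List.length_ofFn,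
    List.map_ofFn]
  · simp only [Function.comp_def, ladderZ_mul_self, Algebra.smul_def, mul_one]
    rw [← Function.comp_def (algebraMap ℂ _), ← List.map_ofFn, ← map_list_prod, List.prod_ofFn,
      ← map_mul]
  · exact List.pairwise_ofFn.mpr fun j k hjk => ladderZ_mul_ladderZ_of_ne _ _ _ _ hjk.ne

end CanonicalAnticommutation

section Conjugation

variable {ρ σ : ℕ}

theorem basisMonomialZ_cons (k : Fin (ρ + σ)) (l : List (Fin (ρ + σ))) :
    basisMonomialZ ρ σ (k :: l) = creaZ ρ σ k (basisMonomialZ ρ σ l) := by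
  simp [basisMonomialZ, creaZ]

theorem span_basisMonomialZ : Submodule.span ℂ (Set.range (basisMonomialZ ρ σ)) = ⊤ := by
  set V := Submodule.span ℂ (Set.range (basisMonomialZ ρ σ))
  have hmul : V * V ≤ V := by
    rw [Submodule.span_mul_span, Submodule.span_le]
    rintro _ ⟨_, ⟨l₁, rfl⟩, _, ⟨l₂, rfl⟩, rfl⟩
    exact Submodule.subset_span ⟨l₁ ++ l₂, by simp [basisMonomialZ]⟩
  have hι : ∀ v, ExteriorAlgebra.ι ℂ v ∈ V := fun v => by
    rw [← Finset.univ_sum_single v, map_sum]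
    refine Submodule.sum_mem _ fun k _ => ?_
    rw [show Pi.single k (v k) = v k • Pi.single k 1 by ext; simp [Pi.single_apply], map_smul]
    exact Submodule.smul_mem _ _ (Submodule.subset_span ⟨[k], by simp [basisMonomialZ]⟩)
  rw [eq_top_iff]
  rintro a -
  induction a using CliffordAlgebra.induction with
  | algebraMap r =>
    rw [Algebra.algebraMap_eq_smul_one]
    exact Submodule.smul_mem _ _ (Submodule.subset_span ⟨[], by simp [basisMonomialZ]⟩)
  | ι v => exact hι v
  | mul x y hx hy => exact hmul (Submodule.mul_mem_mul hx hy)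
  | add x y hx hy => exact add_mem hx hy

variable {st : ZPolyform ρ σ → ZPolyform ρ σ}

namespace IsConjugationZ

noncomputable def toStarLinearMap (hst : IsConjugationZ ρ σ st) :
    ZPolyform ρ σ →ₗ⋆[ℂ] ZPolyform ρ σ where
  toFun := st
  map_add' := hst.1
  map_smul' := hst.2.1

variable (hst : IsConjugationZ ρ σ st)
include hst

theorem apply_apply (x : ZPolyform ρ σ) : st (st x) = x := by
  have h : hst.toStarLinearMap.comp hst.toStarLinearMap = LinearMap.id :=
    LinearMap.ext_on_range span_basisMonomialZ fun l => by
      simp [toStarLinearMap, hst.2.2 l]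
  exact LinearMap.congr_fun h x

theorem apply_creaZ (k : Fin (ρ + σ)) (x : ZPolyform ρ σ) :
    st (creaZ ρ σ k x) = creaZ ρ σ k (st x) := by
  have h : hst.toStarLinearMap.comp (creaZ ρ σ k) = (creaZ ρ σ k).comp hst.toStarLinearMap :=
    LinearMap.ext_on_range span_basisMonomialZ fun l => by
      simp [toStarLinearMap, hst.2.2, ← basisMonomialZ_cons]
  exact LinearMap.congr_fun h x

theorem apply_anniZ_basisMonomialZ (k : Fin (ρ + σ)) (l : List (Fin (ρ + σ))) :
    st (anniZ ρ σ k (basisMonomialZ ρ σ l)) = anniZ ρ σ k (basisMonomialZ ρ σ l) := by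
  induction l with
  | nil =>
    have h : anniZ ρ σ k (basisMonomialZ ρ σ []) = 0 := CliffordAlgebra.contractLeft_one _ _
    rw [h]
    exact map_zero hst.toStarLinearMap
  | cons j l ih =>
    have h := LinearMap.congr_fun (anniZ_mul_creaZ k j) (basisMonomialZ ρ σ l)
    simp only [Module.End.mul_apply, LinearMap.sub_apply, LinearMap.smul_apply,
      Module.End.one_apply] at h
    have hsub : ∀ x y, st (x - y) = st x - st y := map_sub hst.toStarLinearMap
    rw [basisMonomialZ_cons, h, hsub, hst.2.1, hst.apply_creaZ, ih, hst.2.2]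
    split_ifs <;> simp

theorem apply_anniZ (k : Fin (ρ + σ)) (x : ZPolyform ρ σ) :
    st (anniZ ρ σ k x) = anniZ ρ σ k (st x) := by
  have h : hst.toStarLinearMap.comp (anniZ ρ σ k) = (anniZ ρ σ k).comp hst.toStarLinearMap :=
    LinearMap.ext_on_range span_basisMonomialZ fun l => by
      simp [toStarLinearMap, hst.2.2, hst.apply_anniZ_basisMonomialZ]
  exact LinearMap.congr_fun h x

theorem apply_ladderZ (u v : ℂ) (k : Fin (ρ + σ)) (x : ZPolyform ρ σ) :
    st (ladderZ u v k x) = ladderZ (starRingEnd ℂ u) (starRingEnd ℂ v) k (st x) := by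
  simp only [ladderZ, LinearMap.add_apply, LinearMap.smul_apply, hst.1, hst.2.1, hst.apply_creaZ,
    hst.apply_anniZ]

theorem ladderProdZ_apply_ladderProdZ {u v : Fin (ρ + σ) → ℂ} {c : ℂ}
    (hu : ∀ k, starRingEnd ℂ (u k) = c * u k) (hv : ∀ k, starRingEnd ℂ (v k) = c * v k)
    (ψ : ZPolyform ρ σ) :
    ladderProdZ u v (st (ladderProdZ u v (st ψ)))
      = (c ^ (ρ + σ) * ((-1) ^ (ρ + σ).choose 2 * ∏ k, u k * v k)) • ψ := by
  have hcomm (x : ZPolyform ρ σ) :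
      st (ladderProdZ u v x) = c ^ (ρ + σ) • ladderProdZ u v (st x) := by
    have h := apply_list_prod_apply_of_intertwining (f := st) (c := c)
      (L := List.ofFn fun k => ladderZ (u k) (v k) k) (fun T hT y => by
        obtain ⟨k, rfl⟩ := List.mem_ofFn.mp hT
        rw [hst.apply_ladderZ, hu, hv, ← smul_ladderZ, LinearMap.smul_apply]) x
    rwa [List.length_ofFn] at h
  rw [hcomm, hst.apply_apply, map_smul, ← Module.End.mul_apply, ladderProdZ_mul_self,
    LinearMap.smul_apply, Module.End.one_apply, smul_smul]

end IsConjugationZ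

end Conjugation

section GammaOperators

variable {ρ σ : ℕ}

theorem GamZ_of_lt {i : ℕ} (hi : i < ρ) :
    GamZ ρ σ ⟨i, by omega⟩ = ladderZ 1 1 ⟨i, by omega⟩ := by
  rw [GamZ, dif_pos hi, ladderZ, one_smul, one_smul]

theorem GamZ_add_of_lt {i : ℕ} (hi : i < ρ) :
    GamZ ρ σ ⟨ρ + i, by omega⟩ = ladderZ Complex.I (-Complex.I) ⟨i, by omega⟩ := by
  simp only [GamZ, dif_neg (show ¬ ρ + i < ρ by omega), dif_pos (show ρ + i < 2 * ρ by omega),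
    Nat.add_sub_cancel_left, ladderZ]
  module

theorem GamZ_two_mul_add_of_lt {j : ℕ} (hj : j < σ) :
    GamZ ρ σ ⟨2 * ρ + j, by omega⟩ = ladderZ Complex.I Complex.I ⟨ρ + j, by omega⟩ := by
  have h : 2 * ρ + j - ρ = ρ + j := by omega
  simp only [GamZ, dif_neg (show ¬ 2 * ρ + j < ρ by omega),
    dif_neg (show ¬ 2 * ρ + j < 2 * ρ by omega), dif_pos (show 2 * ρ + j < 2 * ρ + σ by omega),
    h, ladderZ, smul_add]

theorem GamZ_two_mul_add_add_of_lt {j : ℕ} (hj : j < σ) :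
    GamZ ρ σ ⟨2 * ρ + σ + j, by omega⟩ = ladderZ 1 (-1) ⟨ρ + j, by omega⟩ := by
  have h : 2 * ρ + σ + j - ρ - σ = ρ + j := by omega
  simp only [GamZ, dif_neg (show ¬ 2 * ρ + σ + j < ρ by omega),
    dif_neg (show ¬ 2 * ρ + σ + j < 2 * ρ by omega),
    dif_neg (show ¬ 2 * ρ + σ + j < 2 * ρ + σ by omega), h, ladderZ]
  module

/-- The sign of `Γ_A²` for the `Γ_A` of mode `k` appearing in `R` (or in `R'`). -/
noncomputable def modeSignZ (k : Fin (ρ + σ)) : ℂ := if (k : ℕ) < ρ then 1 else -1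

theorem conj_modeSignZ (k : Fin (ρ + σ)) : starRingEnd ℂ (modeSignZ k) = modeSignZ k := by
  unfold modeSignZ
  split_ifs <;> simp

theorem prod_modeSignZ : ∏ k : Fin (ρ + σ), modeSignZ k = (-1) ^ σ := by
  simp [Fin.prod_univ_add, modeSignZ]

theorem RopZ_eq_ladderProdZ (st : ZPolyform ρ σ → ZPolyform ρ σ) (ψ : ZPolyform ρ σ) :
    RopZ ρ σ st ψ = ladderProdZ (fun _ => 1) modeSignZ (st ψ) := by
  rw [RopZ, ladderProdZ, List.ofFn_add, List.ofFn_eq_map, List.ofFn_eq_map]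
  congr 4
  · funext i
    simp only [modeSignZ, Fin.val_castLE, i.2, ↓reduceIte]
    exact GamZ_of_lt i.2
  · funext j
    simp only [modeSignZ, Fin.val_natAdd, Nat.not_lt.mpr (Nat.le_add_right ρ j), ↓reduceIte]
    exact GamZ_two_mul_add_add_of_lt j.2

theorem RopZ'_eq_ladderProdZ (st : ZPolyform ρ σ → ZPolyform ρ σ) (ψ : ZPolyform ρ σ) :
    RopZ' ρ σ st ψ
      = ladderProdZ (fun _ => Complex.I) (fun k => -Complex.I * modeSignZ k) (st ψ) := by
  rw [RopZ', ladderProdZ, List.ofFn_add, List.ofFn_eq_map, List.ofFn_eq_map]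
  congr 4
  · funext i
    simp only [modeSignZ, Fin.val_castLE, i.2, ↓reduceIte, mul_one]
    exact GamZ_add_of_lt i.2
  · funext j
    simp only [modeSignZ, Fin.val_natAdd, Nat.not_lt.mpr (Nat.le_add_right ρ j), ↓reduceIte,
      mul_neg_one, neg_neg]
    exact GamZ_two_mul_add_of_lt j.2

end GammaOperators

section Signs

theorem neg_one_zpow_eq_pow_of_even_sub {a : ℤ} {b : ℕ} (h : Even (a - b)) :
    (-1 : ℂ) ^ a = (-1) ^ b := by
  rw [← sub_add_cancel a b, zpow_add₀ (by norm_num), h.neg_one_zpow, one_mul, zpow_natCast]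

theorem two_mul_choose_two_intCast (n : ℕ) : 2 * (n.choose 2 : ℤ) = n * (n - 1) := by
  have h := Nat.cast_choose_two ℚ n
  exact_mod_cast (by linarith : (2 : ℚ) * n.choose 2 = n * (n - 1))

variable (ρ σ : ℕ)

theorem neg_one_zpow_sub_mul_sub_sub_one_div_two :
    (-1 : ℂ) ^ (((ρ : ℤ) - σ) * ((ρ : ℤ) - σ - 1) / 2) = (-1) ^ ((ρ + σ).choose 2 + σ) := by
  apply neg_one_zpow_eq_pow_of_even_sub
  have hC := two_mul_choose_two_intCast (ρ + σ)
  push_cast at hC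
  rw [Int.ediv_eq_of_eq_mul_left two_ne_zero (c := (ρ + σ).choose 2 + σ - 2 * ρ * σ)
    (by linear_combination -hC)]
  exact ⟨-(ρ * σ), by push_cast; ring⟩

theorem neg_one_zpow_sub_mul_sub_add_one_div_two :
    (-1 : ℂ) ^ (((ρ : ℤ) - σ) * ((ρ : ℤ) - σ + 1) / 2)
      = (-1) ^ (ρ + σ + ((ρ + σ).choose 2 + σ)) := by
  apply neg_one_zpow_eq_pow_of_even_sub
  have hC := two_mul_choose_two_intCast (ρ + σ)
  push_cast at hC
  rw [Int.ediv_eq_of_eq_mul_left two_ne_zero (c := (ρ + σ).choose 2 + ρ - 2 * ρ * σ)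
    (by linear_combination -hC)]
  exact ⟨-(ρ * σ) - σ, by push_cast; ring⟩

end Signs

theorem RopZ_RopZ'_sq_general (ρ σ : ℕ)
    (st : ZPolyform ρ σ → ZPolyform ρ σ) (hst : IsConjugationZ ρ σ st) (ψ : ZPolyform ρ σ) :
    RopZ ρ σ st (RopZ ρ σ st ψ)
      = ((-1 : ℂ) ^ ((((ρ : ℤ) - σ) * ((ρ : ℤ) - σ - 1)) / 2)) • ψ ∧
    RopZ' ρ σ st (RopZ' ρ σ st ψ)
      = ((-1 : ℂ) ^ ((((ρ : ℤ) - σ) * ((ρ : ℤ) - σ + 1)) / 2)) • ψ := by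
  constructor
  · rw [RopZ_eq_ladderProdZ, RopZ_eq_ladderProdZ,
      hst.ladderProdZ_apply_ladderProdZ (c := 1) (fun _ => by simp)
        (fun _ => by rw [conj_modeSignZ, one_mul]),
      neg_one_zpow_sub_mul_sub_sub_one_div_two]
    simp only [one_pow, one_mul, prod_modeSignZ, pow_add]
  · rw [RopZ'_eq_ladderProdZ, RopZ'_eq_ladderProdZ,
      hst.ladderProdZ_apply_ladderProdZ (c := -1) (fun _ => by simp)
        (fun _ => by simp [conj_modeSignZ]),
      neg_one_zpow_sub_mul_sub_add_one_div_two]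
    simp only [mul_neg, ← mul_assoc, Complex.I_mul_I, neg_mul, one_mul, neg_neg, prod_modeSignZ,
      pow_add]

/-- `R² = (−1)^{(ρ−σ)(ρ−σ−1)/2} id` and `(R')² = (−1)^{(ρ−σ)(ρ−σ+1)/2} id`;
in particular the signs depend only on the difference `ρ − σ`. -/
theorem RopZ_RopZ'_sq (ρ σ : ℕ) (hρσ : 1 ≤ ρ + σ)
    (st : ZPolyform ρ σ → ZPolyform ρ σ) (hst : IsConjugationZ ρ σ st) (ψ : ZPolyform ρ σ) :
    RopZ ρ σ st (RopZ ρ σ st ψ)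
      = ((-1 : ℂ) ^ ((((ρ : ℤ) - σ) * ((ρ : ℤ) - σ - 1)) / 2)) • ψ ∧
    RopZ' ρ σ st (RopZ' ρ σ st ψ)
      = ((-1 : ℂ) ^ ((((ρ : ℤ) - σ) * ((ρ : ℤ) - σ + 1)) / 2)) • ψ :=
  RopZ_RopZ'_sq_general ρ σ st hst ψ
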